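/- arXiv:2110.13584 — 3 statements merged into one kernel-verified Lean document; each statement's English description precedes it below -/
import Mathlib

section
/- For every η > 0 and every real t with t > π/η, the Fourier transform satisfies |F_η(t)| ≤ (1/(2π)) · π² / (t³ η² − t π²). -/
/-!
Since `f_η` is even, `F_η(t) = (1/2π) ∫_{-η}^{η} cos²(πw/2η) cos(tw) dw`. Writing
`cos² x = (1 + cos 2x)/2` and using product-to-sum formulas, this integral is elementary, and
because `(π/η) · η = π` its value collapses to `F_η(t) = -(1/2π) π² sin(tη) / (t³η² - tπ²)`.
For `t > π/η` the denominator is positive, and `|sin| ≤ 1` gives the bound.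
-/

open Real MeasureTheory

/-- The indicator function `f_η`. -/
noncomputable def indFun (η w : ℝ) : ℝ :=
  if -η < w ∧ w < η then Real.cos (Real.pi * w / (2 * η)) ^ 2 else 0

/-- The Fourier transform `F_η(t) = (1/(2π)) ∫ f_η(w) e^{-i t w} dw`. -/
noncomputable def indFT (η t : ℝ) : ℂ :=
  (1 / (2 * Real.pi) : ℂ) * ∫ w : ℝ, (indFun η w : ℂ) * Complex.exp (-Complex.I * t * w)

theorem intervalIntegral_neg_self_eq_zero_of_odd {E : Type*} [NormedAddCommGroup E]
    [NormedSpace ℝ E] {f : ℝ → E} (hf : ∀ x, f (-x) = -f x) (c : ℝ) :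
    ∫ x in -c..c, f x = 0 := by
  have h : ∫ x in -c..c, f x = -∫ x in -c..c, f x := by
    calc ∫ x in -c..c, f x = ∫ x in -c..c, f (-x) := by
          rw [intervalIntegral.integral_comp_neg, neg_neg]
      _ = -∫ x in -c..c, f x := by simp only [hf, intervalIntegral.integral_neg]
  have h2 : (2 : ℝ) • ∫ x in -c..c, f x = 0 := by
    rw [two_smul]; nth_rewrite 2 [h]; exact add_neg_cancel _
  exact (smul_eq_zero.mp h2).resolve_left two_ne_zero

theorem Complex.exp_neg_I_mul_ofReal (x : ℝ) :
    Complex.exp (-Complex.I * x) = Real.cos x - Complex.I * Real.sin x := by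
  apply Complex.ext <;> simp [Complex.exp_re, Complex.exp_im, Complex.cos_ofReal_re,
    Complex.sin_ofReal_re]

theorem intervalIntegral_ofReal_mul_exp_of_even {f : ℝ → ℝ} {c : ℝ}
    (hf : IntervalIntegrable f volume (-c) c) (heven : ∀ x, f (-x) = f x) (t : ℝ) :
    ∫ w in -c..c, (f w : ℂ) * Complex.exp (-Complex.I * t * w)
      = ((∫ w in -c..c, f w * Real.cos (t * w) : ℝ) : ℂ) := by
  have hsplit : ∀ w : ℝ, (f w : ℂ) * Complex.exp (-Complex.I * t * w)
      = ((f w * Real.cos (t * w) : ℝ) : ℂ) - Complex.I * ((f w * Real.sin (t * w) : ℝ) : ℂ) := by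
    intro w
    rw [mul_assoc, ← Complex.ofReal_mul, Complex.exp_neg_I_mul_ofReal]
    push_cast
    ring
  have hodd : ∫ w in -c..c, f w * Real.sin (t * w) = 0 :=
    intervalIntegral_neg_self_eq_zero_of_odd (fun w => by
      rw [heven, mul_neg, Real.sin_neg, mul_neg]) c
  have hcos := hf.mul_continuousOn (Real.continuous_cos.comp (continuous_const_mul t)).continuousOn
  have hsin := hf.mul_continuousOn (Real.continuous_sin.comp (continuous_const_mul t)).continuousOn
  rw [intervalIntegral.integral_congr fun w _ => hsplit w, intervalIntegral.integral_sub,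
    intervalIntegral.integral_const_mul, intervalIntegral.integral_ofReal,
    intervalIntegral.integral_ofReal, hodd, Complex.ofReal_zero, mul_zero, sub_zero]
  · exact ⟨hcos.1.ofReal, hcos.2.ofReal⟩
  · exact IntervalIntegrable.const_mul ⟨hsin.1.ofReal, hsin.2.ofReal⟩ _

-- `cos² (a w / 2) cos (t w) = cos (t w) / 2 + cos ((t - a) w) / 4 + cos ((t + a) w) / 4`
theorem hasDerivAt_cos_sq_mul_cos_antideriv {a t : ℝ} (ht : t ≠ 0) (hsub : t - a ≠ 0)
    (hadd : t + a ≠ 0) (w : ℝ) :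
    HasDerivAt (fun w => sin (t * w) / (2 * t) + sin ((t - a) * w) / (4 * (t - a))
        + sin ((t + a) * w) / (4 * (t + a))) (cos (a * w / 2) ^ 2 * cos (t * w)) w := by
  have hlin : ∀ b : ℝ, HasDerivAt (fun w => sin (b * w)) (cos (b * w) * b) w := fun b =>
    (hasDerivAt_sin _).comp w (by simpa using (hasDerivAt_id w).const_mul b)
  refine ((((hlin t).div_const (2 * t)).add ((hlin (t - a)).div_const (4 * (t - a)))).add
    ((hlin (t + a)).div_const (4 * (t + a)))).congr_deriv ?_
  rw [cos_sq, show 2 * (a * w / 2) = a * w by ring, sub_mul, add_mul, cos_sub, cos_add]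
  field_simp
  ring

theorem integral_cos_sq_mul_cos {a c t : ℝ} (hac : a * c = π) (ht : t ≠ 0) (hsub : t - a ≠ 0)
    (hadd : t + a ≠ 0) :
    ∫ w in -c..c, cos (a * w / 2) ^ 2 * cos (t * w)
      = -(a ^ 2 * sin (t * c)) / (t * (t ^ 2 - a ^ 2)) := by
  rw [intervalIntegral.integral_eq_sub_of_hasDerivAt
    (fun w _ => hasDerivAt_cos_sq_mul_cos_antideriv ht hsub hadd w)
    ((by fun_prop : Continuous fun w => cos (a * w / 2) ^ 2 * cos (t * w)).intervalIntegrable _ _)]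
  have hsq : t ^ 2 - a ^ 2 ≠ 0 := by
    rw [sq_sub_sq]; exact mul_ne_zero hadd hsub
  simp only [mul_neg, sin_neg, sub_mul, add_mul, hac, sin_sub_pi, sin_add_pi]
  field_simp
  ring

theorem indFun_eq_indicator (η : ℝ) :
    indFun η = (Set.Ioo (-η) η).indicator fun w => cos (π * w / (2 * η)) ^ 2 := by
  funext w
  simp only [indFun, Set.indicator, Set.mem_Ioo]

theorem integral_indFun_mul_exp {η : ℝ} (hη : 0 ≤ η) (t : ℝ) :
    ∫ w, (indFun η w : ℂ) * Complex.exp (-Complex.I * t * w)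
      = ∫ w in -η..η,
          ((cos (π * w / (2 * η)) ^ 2 : ℝ) : ℂ) * Complex.exp (-Complex.I * t * w) := by
  have hind : (fun w : ℝ => (indFun η w : ℂ) * Complex.exp (-Complex.I * t * w))
      = (Set.Ioo (-η) η).indicator
          fun w => ((cos (π * w / (2 * η)) ^ 2 : ℝ) : ℂ) * Complex.exp (-Complex.I * t * w) := by
    funext w
    by_cases hw : w ∈ Set.Ioo (-η) η <;> simp [indFun_eq_indicator, hw]
  rw [hind, integral_indicator measurableSet_Ioo, ← integral_Ioc_eq_integral_Ioo,
    ← intervalIntegral.integral_of_le (by linarith)]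

theorem indFT_eq {η t : ℝ} (hη : 0 < η) (ht : t ≠ 0) (hres : t ^ 2 * η ^ 2 ≠ π ^ 2) :
    indFT η t
      = ((1 / (2 * π) * (-(π ^ 2 * sin (t * η)) / (t ^ 3 * η ^ 2 - t * π ^ 2)) : ℝ) : ℂ) := by
  have hη0 := hη.ne'
  have hres' : t * η - π ≠ 0 ∧ t * η + π ≠ 0 := by
    rw [← mul_ne_zero_iff, show (t * η - π) * (t * η + π) = t ^ 2 * η ^ 2 - π ^ 2 by ring]
    exact sub_ne_zero.mpr hres
  have hsub : t - π / η ≠ 0 := by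
    rw [show t - π / η = (t * η - π) / η by field_simp]; exact div_ne_zero hres'.1 hη0
  have hadd : t + π / η ≠ 0 := by
    rw [show t + π / η = (t * η + π) / η by field_simp]; exact div_ne_zero hres'.2 hη0
  have harg : ∀ w, π * w / (2 * η) = π / η * w / 2 := fun w => by field_simp
  have heven : ∀ w, cos (π * -w / (2 * η)) ^ 2 = cos (π * w / (2 * η)) ^ 2 := fun w => by
    rw [mul_neg, neg_div, cos_neg]
  rw [indFT, integral_indFun_mul_exp hη.le, intervalIntegral_ofReal_mul_exp_of_even
    ((by fun_prop : Continuous fun w => cos (π * w / (2 * η)) ^ 2).intervalIntegrable _ _) heven,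
    intervalIntegral.integral_congr fun w _ => by rw [harg],
    integral_cos_sq_mul_cos (div_mul_cancel₀ π hη0) ht hsub hadd]
  have hval : -((π / η) ^ 2 * sin (t * η)) / (t * (t ^ 2 - (π / η) ^ 2))
      = -(π ^ 2 * sin (t * η)) / (t ^ 3 * η ^ 2 - t * π ^ 2) := by
    field_simp
  rw [hval]
  push_cast
  ring

theorem stmt_2 (η t : ℝ) (hη : 0 < η) (ht : Real.pi / η < t) :
    ‖indFT η t‖ ≤ (1 / (2 * Real.pi)) * (Real.pi ^ 2 / (t ^ 3 * η ^ 2 - t * Real.pi ^ 2)) := by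
  have ht0 : 0 < t := (div_pos pi_pos hη).trans ht
  have hres : π ^ 2 < t ^ 2 * η ^ 2 := by
    rw [← mul_pow]; exact pow_lt_pow_left₀ ((div_lt_iff₀ hη).mp ht) pi_pos.le two_ne_zero
  have hden : 0 < t ^ 3 * η ^ 2 - t * π ^ 2 := by
    rw [show t ^ 3 * η ^ 2 - t * π ^ 2 = t * (t ^ 2 * η ^ 2 - π ^ 2) by ring]
    exact mul_pos ht0 (sub_pos.mpr hres)
  rw [indFT_eq hη ht0.ne' hres.ne', Complex.norm_real, Real.norm_eq_abs, abs_mul,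
    abs_of_pos (by positivity), abs_div, abs_neg, abs_of_pos hden, abs_mul,
    abs_of_nonneg (sq_nonneg π)]
  gcongr
  exact mul_le_of_le_one_right (sq_nonneg π) (abs_sin_le_one _)
end

section
/- For every real η > 0 and every natural number T with η T > π, the series ∑_{t = T+1}^∞ π² / (η² t³ − π² t) (sum over integers t > T) converges and is bounded above by (1/2) · log( η² T² / (η² T² − π²) ). -/
/-!
The map `x ↦ (1/2) log (η²x² / (η²x² - π²))` is an antiderivative of `-π² / (η²x³ - π²x)`,
so the series is dominated by the integral of its decreasing summand from `T` to `∞`. Instead of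
integrating, the comparison is made term by term: by `log y ≥ 1 - 1/y`, each summand at `t + 1`
is at most the drop of this potential between `t` and `t + 1`, and the potential is nonnegative,
so the partial sums telescope to at most its value at `T`.
-/

open Real

theorem summable_and_tsum_le_of_le_sub_succ {f G : ℕ → ℝ} (hf : ∀ n, 0 ≤ f n)
    (hG : ∀ n, 0 ≤ G n) (h : ∀ n, f n ≤ G n - G (n + 1)) :
    Summable f ∧ ∑' n, f n ≤ G 0 := by
  have partial_le : ∀ n, ∑ i ∈ Finset.range n, f i ≤ G 0 := fun n =>
    calc ∑ i ∈ Finset.range n, f i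
        ≤ ∑ i ∈ Finset.range n, (G i - G (i + 1)) := Finset.sum_le_sum fun i _ => h i
      _ = G 0 - G n := Finset.sum_range_sub' G n
      _ ≤ G 0 := sub_le_self _ (hG n)
  exact ⟨summable_of_sum_range_le hf partial_le, Real.tsum_le_of_sum_range_le hf partial_le⟩

def Nat.equivSubtypeGT (T : ℕ) : ℕ ≃ {t : ℕ // T < t} where
  toFun n := ⟨T + 1 + n, by omega⟩
  invFun t := t - (T + 1)
  left_inv n := by simp
  right_inv t := Subtype.ext (by have := t.2; simp only; omega)

theorem summable_and_tsum_subtype_gt_le {f G : ℕ → ℝ} {T : ℕ} (hf : ∀ t, T < t → 0 ≤ f t)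
    (hG : ∀ t, T ≤ t → 0 ≤ G t) (h : ∀ t, T ≤ t → f (t + 1) ≤ G t - G (t + 1)) :
    Summable (fun t : {t : ℕ // T < t} => f t) ∧ ∑' t : {t : ℕ // T < t}, f t ≤ G T := by
  obtain ⟨hsum, hle⟩ := summable_and_tsum_le_of_le_sub_succ (f := fun n => f (T + 1 + n))
    (G := fun n => G (T + n)) (fun n => hf _ (by omega)) (fun n => hG _ (by omega))
    (fun n => by simpa only [Nat.add_right_comm T 1 n, ← add_assoc] using h (T + n) (by omega))
  let e := Nat.equivSubtypeGT T
  exact ⟨e.summable_iff.mp hsum, e.tsum_eq (fun t => f t) ▸ hle⟩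

section potential

variable {c d s t : ℝ}

noncomputable def logPotential (c d x : ℝ) : ℝ := (1 / 2) * log (d * x ^ 2 / (d * x ^ 2 - c))

theorem logPotential_nonneg (hc : 0 ≤ c) (h : c < d * t ^ 2) : 0 ≤ logPotential c d t := by
  have hpos : 0 < d * t ^ 2 - c := by linarith
  refine mul_nonneg (by norm_num) (log_nonneg ?_)
  rw [le_div_iff₀ hpos]
  linarith

theorem div_cube_sub_nonneg (hc : 0 ≤ c) (ht : 0 < t) (h : c < d * t ^ 2) :
    0 ≤ c / (d * t ^ 3 - c * t) := by
  have : d * t ^ 3 - c * t = t * (d * t ^ 2 - c) := by ring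
  rw [this]
  exact div_nonneg hc (mul_pos ht (by linarith)).le

theorem div_cube_sub_le_logPotential_sub (hc : 0 ≤ c) (hs : 0 < s) (h : c < d * s ^ 2) :
    c / (d * (s + 1) ^ 3 - c * (s + 1)) ≤ logPotential c d s - logPotential c d (s + 1) := by
  have hs1 : c < d * (s + 1) ^ 2 := by nlinarith
  have hA : 0 < d * s ^ 2 - c := by linarith
  have hB : 0 < d * (s + 1) ^ 2 - c := by linarith
  have hd : 0 < d := by nlinarith
  set X := d * s ^ 2 / (d * s ^ 2 - c)
  set Y := d * (s + 1) ^ 2 / (d * (s + 1) ^ 2 - c)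
  have hX : 0 < X := by positivity
  have hY : 0 < Y := by positivity
  have log_drop : 1 - Y / X ≤ log X - log Y := by
    rw [← log_div hX.ne' hY.ne']
    simpa only [inv_div] using one_sub_inv_le_log_of_pos (div_pos hX hY)
  have drop_eq : 1 - Y / X = c * (2 * s + 1) / (s ^ 2 * (d * (s + 1) ^ 2 - c)) := by
    simp only [X, Y]
    field_simp
    ring
  have term_le : c / (d * (s + 1) ^ 3 - c * (s + 1)) ≤ (1 / 2) * (1 - Y / X) := by
    rw [drop_eq, show d * (s + 1) ^ 3 - c * (s + 1) = (s + 1) * (d * (s + 1) ^ 2 - c) by ring,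
      mul_div_assoc', div_le_div_iff₀ (by positivity) (by positivity)]
    -- `2 s² ≤ (2 s + 1)(s + 1)`
    nlinarith [mul_nonneg (mul_nonneg hc hB.le) hs.le]
  simp only [logPotential]
  linarith

end potential

theorem stmt_4 (η : ℝ) (T : ℕ) (hη : 0 < η) (hηT : Real.pi < η * T) :
    Summable (fun t : {t : ℕ // T < t} =>
      Real.pi ^ 2 / (η ^ 2 * (t : ℝ) ^ 3 - Real.pi ^ 2 * (t : ℝ))) ∧
    ∑' t : {t : ℕ // T < t},
        Real.pi ^ 2 / (η ^ 2 * (t : ℝ) ^ 3 - Real.pi ^ 2 * (t : ℝ)) ≤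
      (1 / 2) * Real.log (η ^ 2 * (T : ℝ) ^ 2 / (η ^ 2 * (T : ℝ) ^ 2 - Real.pi ^ 2)) := by
  have hT : 0 < T := Nat.pos_of_ne_zero fun h0 => by
    simp only [h0, Nat.cast_zero, mul_zero] at hηT
    exact pi_pos.not_gt hηT
  have hc : 0 ≤ π ^ 2 := sq_nonneg π
  have pi_sq_lt : ∀ t : ℕ, T ≤ t → π ^ 2 < η ^ 2 * (t : ℝ) ^ 2 := fun t ht => by
    have : π < η * t := hηT.trans_le (by gcongr)
    nlinarith [pi_pos]
  refine summable_and_tsum_subtype_gt_le (G := fun t : ℕ => logPotential (π ^ 2) (η ^ 2) t)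
    (fun t ht => div_cube_sub_nonneg hc (Nat.cast_pos.mpr (by omega)) (pi_sq_lt t ht.le))
    (fun t ht => logPotential_nonneg hc (pi_sq_lt t ht)) (fun t ht => ?_)
  exact_mod_cast div_cube_sub_le_logPotential_sub hc (Nat.cast_pos.mpr (by omega)) (pi_sq_lt t ht)
end

section
/- Let η > 0, let T be a natural number, and let (F_t)_{t ∈ ℤ} and (g_t)_{t ∈ ℤ} be complex sequences such that |F_t| ≤ η · e^{−√(|t| η / 2)} for all integers t with |t| > T, and |g_t| ≤ 1 for all t. Then for every real w, the tail series ∑_{|t| > T} e^{i t w} F_t g_{−t} converges absolutely and its absolute value is at most 8 · (1 + √(T η / 2)) · e^{−√(T η / 2)}. -/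
/-!
With `ψ n = √(n η / 2)` and `φ u = (1 + u) e^{-u}`, consecutive values satisfy
`ψ (n + 1)² - ψ n² = η / 2`, and the estimate `e^d ≥ 1 + d + d² / 2` gives
`η e^{-ψ (n + 1)} ≤ 4 (φ (ψ n) - φ (ψ (n + 1)))`. The sum of the weights over `n > T` therefore
telescopes to at most `4 φ (ψ T)`, and the two signs of `t` contribute a factor `2`.
-/

open Real Finset

lemma sq_sub_sq_div_two_mul_exp_neg_le {u v : ℝ} (hu : 0 ≤ u) (huv : u ≤ v) :
    (v ^ 2 - u ^ 2) / 2 * exp (-v) ≤ (1 + u) * exp (-u) - (1 + v) * exp (-v) := by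
  have hexp : 1 + (v - u) + (v - u) ^ 2 / 2 ≤ exp (v - u) :=
    quadratic_le_exp_of_nonneg (sub_nonneg.mpr huv)
  have hmain : (v ^ 2 - u ^ 2) / 2 + (1 + v) ≤ (1 + u) * exp (v - u) := by
    nlinarith [mul_le_mul_of_nonneg_left hexp (by linarith : (0 : ℝ) ≤ 1 + u),
      mul_nonneg hu (sq_nonneg (v - u))]
  have hsplit : exp (-u) = exp (v - u) * exp (-v) := by rw [← exp_add]; ring_nf
  rw [hsplit]
  nlinarith [mul_le_mul_of_nonneg_right hmain (exp_pos (-v)).le]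

lemma HasSum.comp_natAbs {G : Type*} [AddCommGroup G] [TopologicalSpace G]
    [IsTopologicalAddGroup G] {φ : ℕ → G} {s : G} (h : HasSum φ s) :
    HasSum (fun t : ℤ => φ t.natAbs) (s + s - φ 0) :=
  HasSum.of_nat_of_neg (by simpa using h) (by simpa using h)

noncomputable def tailBound (η : ℝ) (n : ℕ) : ℝ :=
  (1 + √(n * η / 2)) * exp (-√(n * η / 2))

noncomputable def tailWeight (η : ℝ) (T n : ℕ) : ℝ :=
  if T < n then η * exp (-√(n * η / 2)) else 0

lemma tailBound_nonneg (η : ℝ) (n : ℕ) : 0 ≤ tailBound η n :=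
  mul_nonneg (by positivity) (exp_pos _).le

section

variable {η : ℝ}

lemma mul_exp_neg_sqrt_succ_le (hη : 0 ≤ η) (n : ℕ) :
    η * exp (-√((n + 1 : ℕ) * η / 2)) ≤ 4 * (tailBound η n - tailBound η (n + 1)) := by
  have hsq : √((n + 1 : ℕ) * η / 2) ^ 2 - √(n * η / 2) ^ 2 = η / 2 := by
    rw [sq_sqrt (by positivity), sq_sqrt (by positivity)]
    push_cast; ring
  have hmono : √(n * η / 2) ≤ √((n + 1 : ℕ) * η / 2) :=
    sqrt_le_sqrt (by gcongr; exact_mod_cast n.le_succ)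
  have := sq_sub_sq_div_two_mul_exp_neg_le (sqrt_nonneg _) hmono
  rw [hsq] at this
  unfold tailBound
  linarith

lemma tailWeight_nonneg (hη : 0 ≤ η) (T n : ℕ) : 0 ≤ tailWeight η T n := by
  unfold tailWeight
  split_ifs <;> positivity

lemma tailWeight_succ_le (hη : 0 ≤ η) (T n : ℕ) :
    tailWeight η T (n + 1) ≤ 4 * (tailBound η (max T n) - tailBound η (max T (n + 1))) := by
  rcases le_or_gt T n with h | h
  · rw [tailWeight, if_pos (Nat.lt_succ_of_le h), max_eq_right h,
      max_eq_right (h.trans n.le_succ)]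
    exact mul_exp_neg_sqrt_succ_le hη n
  · rw [tailWeight, if_neg (by omega), max_eq_left h.le, max_eq_left (by omega)]
    simp

lemma sum_range_tailWeight_le (hη : 0 ≤ η) (T N : ℕ) :
    ∑ n ∈ range N, tailWeight η T n ≤ 4 * tailBound η T := by
  cases N with
  | zero => simpa using tailBound_nonneg η T
  | succ N =>
    have htele : ∑ n ∈ range N, tailWeight η T (n + 1) ≤
        4 * (tailBound η T - tailBound η (max T N)) :=
      calc ∑ n ∈ range N, tailWeight η T (n + 1)
          ≤ ∑ n ∈ range N, 4 * (tailBound η (max T n) - tailBound η (max T (n + 1))) :=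
            sum_le_sum fun n _ => tailWeight_succ_le hη T n
        _ = 4 * (tailBound η T - tailBound η (max T N)) := by
            rw [← mul_sum, sum_range_sub' (fun n => tailBound η (max T n)),
              max_eq_left T.zero_le]
    rw [sum_range_succ', tailWeight, if_neg (Nat.not_lt_zero T)]
    linarith [tailBound_nonneg η (max T N)]

lemma summable_tailWeight (hη : 0 ≤ η) (T : ℕ) : Summable (tailWeight η T) :=
  summable_of_sum_range_le (tailWeight_nonneg hη T) (sum_range_tailWeight_le hη T)

lemma hasSum_tailWeight_natAbs (hη : 0 ≤ η) (T : ℕ) :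
    HasSum (fun t : ℤ => tailWeight η T t.natAbs) (2 * ∑' n, tailWeight η T n) := by
  have hs := (summable_tailWeight hη T).hasSum.comp_natAbs
  rwa [tailWeight, if_neg (Nat.not_lt_zero T), sub_zero, ← two_mul] at hs

lemma tsum_tailWeight_le (hη : 0 ≤ η) (T : ℕ) : ∑' n, tailWeight η T n ≤ 4 * tailBound η T :=
  (summable_tailWeight hη T).tsum_le_of_sum_range_le (sum_range_tailWeight_le hη T)

end

theorem stmt_11 (η : ℝ) (hη : 0 < η) (T : ℕ) (F g : ℤ → ℂ)
    (hF : ∀ t : ℤ, (T : ℤ) < |t| → ‖F t‖ ≤ η * Real.exp (-Real.sqrt (|t| * η / 2)))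
    (hg : ∀ t : ℤ, ‖g t‖ ≤ 1) (w : ℝ) :
    Summable (fun t : {t : ℤ // (T : ℤ) < |t|} =>
      ‖Complex.exp (Complex.I * (t : ℤ) * w) * F t * g (-(t : ℤ))‖) ∧
    ‖∑' t : {t : ℤ // (T : ℤ) < |t|},
        Complex.exp (Complex.I * (t : ℤ) * w) * F t * g (-(t : ℤ))‖ ≤
      8 * (1 + Real.sqrt (T * η / 2)) * Real.exp (-Real.sqrt (T * η / 2)) := by
  set S := {t : ℤ | (T : ℤ) < |t|}
  have hW := hasSum_tailWeight_natAbs hη.le T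
  have hterm : ∀ t : S, ‖Complex.exp (Complex.I * (t : ℤ) * w) * F t * g (-(t : ℤ))‖ ≤
      tailWeight η T (t : ℤ).natAbs := by
    rintro ⟨t, ht⟩
    replace ht : (T : ℤ) < |t| := ht
    have hT : T < t.natAbs := by rw [Int.abs_eq_natAbs] at ht; exact_mod_cast ht
    have hunit : ‖Complex.exp (Complex.I * t * w)‖ = 1 := by
      rw [show Complex.I * t * w = ((t * w : ℝ) : ℂ) * Complex.I by push_cast; ring]
      exact Complex.norm_exp_ofReal_mul_I _
    rw [norm_mul, norm_mul, hunit, one_mul, tailWeight, if_pos hT, Nat.cast_natAbs]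
    exact (mul_le_mul (hF t ht) (hg _) (norm_nonneg _) (by positivity)).trans_eq (mul_one _)
  have hsum := hW.summable.subtype S
  refine ⟨hsum.of_nonneg_of_le (fun _ => norm_nonneg _) hterm, ?_⟩
  calc _ ≤ ∑' t : S, tailWeight η T (t : ℤ).natAbs := tsum_of_norm_bounded hsum.hasSum hterm
    _ ≤ ∑' t : ℤ, tailWeight η T t.natAbs :=
        hW.summable.tsum_subtype_le _ S fun t => tailWeight_nonneg hη.le T _
    _ ≤ 8 * tailBound η T := by linarith [hW.tsum_eq, tsum_tailWeight_le hη.le T]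
    _ = _ := by rw [tailBound]; ring
end
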